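/- arXiv:1210.5322 — 3 statements merged into one kernel-verified Lean document; each statement's English description precedes it below -/
import Mathlib

section
/- Let G be a finite simple graph in which any two distinct 6-cycles are either vertex-disjoint or share exactly one edge. Suppose M_1, M_2, M_3, M_4 are four pairwise distinct perfect matchings of G forming a 4-cycle M_1M_2M_3M_4M_1 in the resonance graph R(G) (i.e. each of M_1⊕M_2, M_2⊕M_3, M_3⊕M_4, M_4⊕M_1 is the edge set of a 6-cycle of G). Then M_1 ⊕ M_2 = M_3 ⊕ M_4, M_1 ⊕ M_4 = M_2 ⊕ M_3, and the two 6-cycles with edge sets M_1 ⊕ M_2 and M_1 ⊕ M_4 are vertex-disjoint. -/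
open SimpleGraph Polynomial

/-- A perfect matching of `G`, given as a set of edges: a set of pairwise
disjoint edges of `G` covering every vertex, i.e. every vertex of `G` lies in
exactly one edge of `M`. -/
def IsPMSet {V : Type*} (G : SimpleGraph V) (M : Set (Sym2 V)) : Prop :=
  M ⊆ G.edgeSet ∧ ∀ v : V, ∃! e, e ∈ M ∧ v ∈ e

/-- `f : Fin 6 → V` traces a 6-cycle of `G`. -/
def IsHexCycle {V : Type*} (G : SimpleGraph V) (f : Fin 6 → V) : Prop :=
  Function.Injective f ∧ ∀ i : Fin 6, G.Adj (f i) (f (i + 1))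

/-- The edge set of the 6-cycle traced by `f`. -/
def hexEdges {V : Type*} (f : Fin 6 → V) : Set (Sym2 V) :=
  {e | ∃ i : Fin 6, e = s(f i, f (i + 1))}

/-- `E` is the edge set of some 6-cycle of `G`. -/
def IsHexagon {V : Type*} (G : SimpleGraph V) (E : Set (Sym2 V)) : Prop :=
  ∃ f : Fin 6 → V, IsHexCycle G f ∧ E = hexEdges f

/-!
Write `Sᵢ` for the hexagons `M₁ ⊕ M₂, M₂ ⊕ M₃, M₃ ⊕ M₄, M₄ ⊕ M₁`. Distinct hexagons share at most
one edge, and `S₁ ⊕ S₂ = M₁ ⊕ M₃ = S₃ ⊕ S₄`. Hence at least five edges of `S₃` lie outside `S₄`,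
so in `S₁ ∪ S₂`, and `S₃` shares at least three edges with `S₁` or with `S₂`; it is therefore
`S₁` (it cannot be `S₂`, as `M₂ ≠ M₄`), and then `S₄ = S₂`. If `S₁` and `S₂ = S₄` had a common
vertex `v`, the `M₁`-edge and the `M₂`-edge at `v` would be two common edges of them.
-/

open Set

section

variable {V : Type*} {G : SimpleGraph V}

def HexagonsDisjointOrShareOneEdge (G : SimpleGraph V) : Prop :=
  ∀ f g : Fin 6 → V, IsHexCycle G f → IsHexCycle G g → hexEdges f ≠ hexEdges g →
    range f ∩ range g = ∅ ∨ (hexEdges f ∩ hexEdges g).ncard = 1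

lemma hexEdges_eq_range (f : Fin 6 → V) :
    hexEdges f = range fun i => s(f i, f (i + 1)) := by
  ext e
  simp [hexEdges, eq_comm]

lemma mem_range_of_mem_hexEdges {f : Fin 6 → V} {e : Sym2 V} {v : V}
    (he : e ∈ hexEdges f) (hv : v ∈ e) : v ∈ range f := by
  obtain ⟨i, rfl⟩ := he
  rcases Sym2.mem_iff.mp hv with rfl | rfl
  exacts [⟨i, rfl⟩, ⟨i + 1, rfl⟩]

lemma exists_mem_hexEdges_of_mem_range {f : Fin 6 → V} {v : V} (hv : v ∈ range f) :
    ∃ e ∈ hexEdges f, v ∈ e := by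
  obtain ⟨i, rfl⟩ := hv
  exact ⟨_, ⟨i, rfl⟩, Sym2.mem_mk_left _ _⟩

lemma ncard_hexEdges {f : Fin 6 → V} (hf : Function.Injective f) :
    (hexEdges f).ncard = 6 := by
  rw [hexEdges_eq_range, ncard_range_of_injective, Nat.card_eq_fintype_card, Fintype.card_fin]
  intro i j h
  rcases Sym2.eq_iff.mp h with ⟨hij, -⟩ | ⟨hij, hji⟩
  · exact hf hij
  · have := hf hij
    have := hf hji
    omega

namespace IsHexagon

variable {S T : Set (Sym2 V)}

lemma finite (hS : IsHexagon G S) : S.Finite := by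
  obtain ⟨f, -, rfl⟩ := hS
  rw [hexEdges_eq_range]
  exact finite_range _

lemma ncard_eq (hS : IsHexagon G S) : S.ncard = 6 := by
  obtain ⟨f, hf, rfl⟩ := hS
  exact ncard_hexEdges hf.1

lemma ncard_inter_le_one (hG : HexagonsDisjointOrShareOneEdge G) (hS : IsHexagon G S)
    (hT : IsHexagon G T) (hne : S ≠ T) : (S ∩ T).ncard ≤ 1 := by
  obtain ⟨f, hf, rfl⟩ := hS
  obtain ⟨g, hg, rfl⟩ := hT
  rcases hG f g hf hg hne with hdisj | hone
  · suffices hexEdges f ∩ hexEdges g = ∅ by simp [this]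
    refine eq_empty_of_forall_notMem fun e ⟨hef, heg⟩ => ?_
    exact (eq_empty_iff_forall_notMem.mp hdisj) _
      ⟨mem_range_of_mem_hexEdges hef e.out_fst_mem, mem_range_of_mem_hexEdges heg e.out_fst_mem⟩
  · exact hone.le

lemma eq_or_eq_of_symmDiff_eq (hG : HexagonsDisjointOrShareOneEdge G) {S₁ S₂ S₃ S₄ : Set (Sym2 V)}
    (h₁ : IsHexagon G S₁) (h₂ : IsHexagon G S₂) (h₃ : IsHexagon G S₃) (h₄ : IsHexagon G S₄)
    (h34 : S₃ ≠ S₄) (h : symmDiff S₁ S₂ = symmDiff S₃ S₄) : S₃ = S₁ ∨ S₃ = S₂ := by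
  by_contra! hne
  have hsub : S₃ \ S₄ ⊆ (S₃ ∩ S₁) ∪ (S₃ ∩ S₂) := by
    intro e he
    rcases (h ▸ Or.inl he : e ∈ symmDiff S₁ S₂) with h1 | h2
    exacts [Or.inl ⟨he.1, h1.1⟩, Or.inr ⟨he.1, h2.1⟩]
  have hdiff : (S₃ ∩ S₄).ncard + (S₃ \ S₄).ncard = 6 :=
    h₃.ncard_eq ▸ ncard_inter_add_ncard_sdiff_eq_ncard S₃ S₄ h₃.finite
  have hfin : ((S₃ ∩ S₁) ∪ (S₃ ∩ S₂)).Finite :=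
    (h₃.finite.inter_of_left _).union (h₃.finite.inter_of_left _)
  have hle := ncard_le_ncard hsub hfin
  have hunion := ncard_union_le (S₃ ∩ S₁) (S₃ ∩ S₂)
  have h₃₄ := h₃.ncard_inter_le_one hG h₄ h34
  have h₃₁ := h₃.ncard_inter_le_one hG h₁ hne.1
  have h₃₂ := h₃.ncard_inter_le_one hG h₂ hne.2
  omega

end IsHexagon

namespace IsPMSet

variable {M N : Set (Sym2 V)}

lemma mem_symmDiff_of_mem (hM : IsPMSet G M) (hN : IsPMSet G N) {v : V} {d a : Sym2 V}
    (hd : d ∈ symmDiff M N) (hvd : v ∈ d) (ha : a ∈ M) (hva : v ∈ a) : a ∈ symmDiff M N := by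
  refine Or.inl ⟨ha, fun haN => ?_⟩
  rcases hd with ⟨hdM, hdN⟩ | ⟨hdN, hdM⟩
  · exact hdN ((hM.2 v).unique ⟨hdM, hvd⟩ ⟨ha, hva⟩ ▸ haN)
  · exact hdM ((hN.2 v).unique ⟨hdN, hvd⟩ ⟨haN, hva⟩ ▸ ha)

end IsPMSet

lemma exists_ne_mem_symmDiff_inter_of_mem {M₁ M₂ M₃ M₄ : Set (Sym2 V)}
    (hM₁ : IsPMSet G M₁) (hM₂ : IsPMSet G M₂) (hM₃ : IsPMSet G M₃) (hM₄ : IsPMSet G M₄)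
    (h : symmDiff M₁ M₄ = symmDiff M₂ M₃) {v : V} {d d' : Sym2 V}
    (hd : d ∈ symmDiff M₁ M₂) (hvd : v ∈ d) (hd' : d' ∈ symmDiff M₁ M₄) (hvd' : v ∈ d') :
    ∃ a b, a ∈ symmDiff M₁ M₂ ∩ symmDiff M₁ M₄ ∧ b ∈ symmDiff M₁ M₂ ∩ symmDiff M₁ M₄ ∧
      a ≠ b := by
  obtain ⟨a, ha, hva⟩ := (hM₁.2 v).exists
  obtain ⟨b, hb, hvb⟩ := (hM₂.2 v).exists
  have ha₁₂ := hM₁.mem_symmDiff_of_mem hM₂ hd hvd ha hva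
  have hb₂₁ := hM₂.mem_symmDiff_of_mem hM₁ (symmDiff_comm M₁ M₂ ▸ hd) hvd hb hvb
  have ha₁₄ := hM₁.mem_symmDiff_of_mem hM₄ hd' hvd' ha hva
  have hb₂₃ := hM₂.mem_symmDiff_of_mem hM₃ (h ▸ hd') hvd' hb hvb
  refine ⟨a, b, ⟨ha₁₂, ha₁₄⟩, ⟨symmDiff_comm M₁ M₂ ▸ hb₂₁, h ▸ hb₂₃⟩, ?_⟩
  rintro rfl
  exact (ha₁₂.elim (fun h => h.2) fun h => absurd ha h.2) hb

end

theorem resonance_four_cycle_general {V : Type*} (G : SimpleGraph V)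
    (hhex : ∀ f g : Fin 6 → V, IsHexCycle G f → IsHexCycle G g →
      hexEdges f ≠ hexEdges g →
      Set.range f ∩ Set.range g = ∅ ∨ (hexEdges f ∩ hexEdges g).ncard = 1)
    (M₁ M₂ M₃ M₄ : Set (Sym2 V))
    (hM₁ : IsPMSet G M₁) (hM₂ : IsPMSet G M₂) (hM₃ : IsPMSet G M₃) (hM₄ : IsPMSet G M₄)
    (h13 : M₁ ≠ M₃)
    (h24 : M₂ ≠ M₄)
    (e12 : IsHexagon G (symmDiff M₁ M₂)) (e23 : IsHexagon G (symmDiff M₂ M₃))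
    (e34 : IsHexagon G (symmDiff M₃ M₄)) (e41 : IsHexagon G (symmDiff M₄ M₁)) :
    symmDiff M₁ M₂ = symmDiff M₃ M₄ ∧ symmDiff M₁ M₄ = symmDiff M₂ M₃ ∧
      ∀ f g : Fin 6 → V, IsHexCycle G f → hexEdges f = symmDiff M₁ M₂ →
        IsHexCycle G g → hexEdges g = symmDiff M₁ M₄ →
        Set.range f ∩ Set.range g = ∅ := by
  have h34_ne_41 : symmDiff M₃ M₄ ≠ symmDiff M₄ M₁ := by
    rw [symmDiff_comm M₄, Ne, symmDiff_left_inj]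
    exact h13.symm
  have h34_ne_23 : symmDiff M₃ M₄ ≠ symmDiff M₂ M₃ := by
    rwa [symmDiff_comm M₂, Ne, symmDiff_right_inj, eq_comm]
  have hcycle : symmDiff (symmDiff M₁ M₂) (symmDiff M₂ M₃) =
      symmDiff (symmDiff M₃ M₄) (symmDiff M₄ M₁) := by
    ext e
    simp only [mem_symmDiff]
    tauto
  have h12_eq_34 : symmDiff M₃ M₄ = symmDiff M₁ M₂ :=
    (e12.eq_or_eq_of_symmDiff_eq hhex e23 e34 e41 h34_ne_41 hcycle).resolve_right h34_ne_23
  have h14_eq_23 : symmDiff M₁ M₄ = symmDiff M₂ M₃ := by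
    rw [← symmDiff_eq_bot, symmDiff_symmDiff_symmDiff_comm, symmDiff_comm M₄, h12_eq_34,
      symmDiff_self]
  refine ⟨h12_eq_34.symm, h14_eq_23, fun f g _ hfS hg hgS => ?_⟩
  refine eq_empty_of_forall_notMem fun v ⟨hvf, hvg⟩ => h24 ?_
  obtain ⟨d, hd, hvd⟩ := exists_mem_hexEdges_of_mem_range hvf
  obtain ⟨d', hd', hvd'⟩ := exists_mem_hexEdges_of_mem_range hvg
  obtain ⟨a, b, ha, hb, hab⟩ := exists_ne_mem_symmDiff_inter_of_mem
    hM₁ hM₂ hM₃ hM₄ h14_eq_23 (hfS ▸ hd) hvd (hgS ▸ hd') hvd'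
  have hhex₁₄ : IsHexagon G (symmDiff M₁ M₄) := ⟨g, hg, hgS.symm⟩
  have htwo : 1 < (symmDiff M₁ M₂ ∩ symmDiff M₁ M₄).ncard :=
    (one_lt_ncard_iff (e12.finite.inter_of_left _)).mpr ⟨a, b, ha, hb, hab⟩
  refine (symmDiff_right_inj (a := M₁)).mp (of_not_not fun hne => ?_)
  exact (e12.ncard_inter_le_one hhex hhex₁₄ hne).not_gt htwo

/-- Let `G` be a finite simple graph in which any two distinct
6-cycles are either vertex-disjoint or share exactly one edge. If
`M₁ M₂ M₃ M₄` are pairwise distinct perfect matchings of `G` forming a 4-cycle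
`M₁M₂M₃M₄M₁` in the resonance graph, then `M₁ ⊕ M₂ = M₃ ⊕ M₄`,
`M₁ ⊕ M₄ = M₂ ⊕ M₃`, and the two 6-cycles with edge sets `M₁ ⊕ M₂` and
`M₁ ⊕ M₄` are vertex-disjoint. -/
theorem resonance_four_cycle {V : Type*} [Fintype V] (G : SimpleGraph V)
    (hhex : ∀ f g : Fin 6 → V, IsHexCycle G f → IsHexCycle G g →
      hexEdges f ≠ hexEdges g →
      Set.range f ∩ Set.range g = ∅ ∨ (hexEdges f ∩ hexEdges g).ncard = 1)
    (M₁ M₂ M₃ M₄ : Set (Sym2 V))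
    (hM₁ : IsPMSet G M₁) (hM₂ : IsPMSet G M₂) (hM₃ : IsPMSet G M₃) (hM₄ : IsPMSet G M₄)
    (h12 : M₁ ≠ M₂) (h13 : M₁ ≠ M₃) (h14 : M₁ ≠ M₄)
    (h23 : M₂ ≠ M₃) (h24 : M₂ ≠ M₄) (h34 : M₃ ≠ M₄)
    (e12 : IsHexagon G (symmDiff M₁ M₂)) (e23 : IsHexagon G (symmDiff M₂ M₃))
    (e34 : IsHexagon G (symmDiff M₃ M₄)) (e41 : IsHexagon G (symmDiff M₄ M₁)) :
    symmDiff M₁ M₂ = symmDiff M₃ M₄ ∧ symmDiff M₁ M₄ = symmDiff M₂ M₃ ∧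
      ∀ f g : Fin 6 → V, IsHexCycle G f → hexEdges f = symmDiff M₁ M₂ →
        IsHexCycle G g → hexEdges g = symmDiff M₁ M₄ →
        Set.range f ∩ Set.range g = ∅ :=
  resonance_four_cycle_general G hhex M₁ M₂ M₃ M₄ hM₁ hM₂ hM₃ hM₄ h13 h24 e12 e23 e34 e41
end

section
/- Let G be a finite simple graph and let C and C' be Clar covers of G. Then V(C) ⊆ V(C') if and only if every hexagon component of C is a connected component of C' and the edge sets of C and C' coincide apart from the edges lying in hexagons of C' (i.e. E(C) \\ H' = E(C') \\ H', where H' is the union of the edge sets of the hexagon components of C'). -/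
open SimpleGraph Polynomial

/-- The edge set of a connected component `c` of `H`: all edges of `H` both of
whose endpoints lie in `c`. -/
def compEdges {V : Type*} (H : SimpleGraph V) (c : H.ConnectedComponent) : Set (Sym2 V) :=
  {e | e ∈ H.edgeSet ∧ ∀ v ∈ e, v ∈ c.supp}

/-- The component `c` of `H` is a hexagon, i.e. a cycle of length six. -/
def IsHexComp {V : Type*} (H : SimpleGraph V) (c : H.ConnectedComponent) : Prop :=
  Nonempty (H.induce c.supp ≃g cycleGraph 6)

/-- The component `c` of `H` is a single edge (a copy of `K₂`). -/
def IsEdgeComp {V : Type*} (H : SimpleGraph V) (c : H.ConnectedComponent) : Prop :=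
  Nonempty (H.induce c.supp ≃g (⊤ : SimpleGraph (Fin 2)))

/-- `H` is a Clar cover of `G`: a spanning subgraph of `G` each of whose
connected components is either a 6-cycle (called a hexagon of the cover) or a
single edge. -/
def IsClarCover {V : Type*} (G H : SimpleGraph V) : Prop :=
  H ≤ G ∧ ∀ c : H.ConnectedComponent, IsHexComp H c ∨ IsEdgeComp H c

/-- For a Clar cover `H` of `G`, the set `V(C)` of perfect matchings `M` of `G`
such that every hexagon `h` of `H` is `M`-alternating (i.e. `M ∩ E(h)` is a
perfect matching of the 6-cycle `h`) and every single-edge component of `H` is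
contained in `M`. -/
def clarVC {V : Type*} (G H : SimpleGraph V) : Set {M : Set (Sym2 V) // IsPMSet G M} :=
  {M | (∀ c : H.ConnectedComponent, IsHexComp H c →
          ∀ v ∈ c.supp, ∃! e, e ∈ M.1 ∩ compEdges H c ∧ v ∈ e) ∧
       (∀ c : H.ConnectedComponent, IsEdgeComp H c → compEdges H c ⊆ M.1)}

/-- The union of the edge sets of the hexagon components of `H`. -/
def hexEdgeUnion {V : Type*} (H : SimpleGraph V) : Set (Sym2 V) :=
  {e | ∃ c : H.ConnectedComponent, IsHexComp H c ∧ e ∈ compEdges H c}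

/-!
If `V(C) ⊆ V(C')`, every matching in `V(C)` uses only edges of `C'`. A hexagon of `C` is the union
of its two perfect matchings, each of which extends to a matching in `V(C)`, so its six edges lie
in `C'`; being connected, it sits inside one component of `C'`, which by counting vertices and
edges is the same hexagon. Since `V(C)` is nonempty, an edge component of `C` lies in `C'`, and an
edge component of `C'`, lying in every matching of `V(C') ⊇ V(C)`, lies in `C`.

Conversely, under the two conditions every matching in `V(C)` uses only edges of `C'`, which makes
it a perfect matching of every component of `C'`; and an edge component of `C'` is not contained
in a hexagon of `C`, so it is an edge component of `C` and lies in the matching.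
-/

section ClarCover

variable {V : Type*} {G H H' : SimpleGraph V}

section compEdges

variable {c : H.ConnectedComponent}

lemma mem_compEdges_of_adj {a b : V} (hab : H.Adj a b) (ha : a ∈ c.supp) :
    s(a, b) ∈ compEdges H c := by
  have hb : b ∈ c.supp := by
    rw [ConnectedComponent.mem_supp_iff] at ha ⊢
    exact (ConnectedComponent.connectedComponentMk_eq_of_adj hab).symm.trans ha
  refine ⟨hab, fun v hv => ?_⟩
  rcases Sym2.mem_iff.mp hv with rfl | rfl <;> assumption

lemma mem_compEdges_of_mem {e : Sym2 V} (he : e ∈ H.edgeSet) {v : V} (hv : v ∈ e)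
    (hvc : v ∈ c.supp) : e ∈ compEdges H c := by
  induction e using Sym2.ind with
  | _ a b =>
    rcases Sym2.mem_iff.mp hv with rfl | rfl
    · exact mem_compEdges_of_adj he hvc
    · rw [Sym2.eq_swap]
      exact mem_compEdges_of_adj (H.mem_edgeSet.mp he).symm hvc

lemma exists_mem_compEdges {e : Sym2 V} (he : e ∈ H.edgeSet) :
    ∃ c : H.ConnectedComponent, e ∈ compEdges H c :=
  ⟨_, mem_compEdges_of_mem he (Sym2.out_fst_mem e) rfl⟩

lemma eq_of_mem_compEdges {c' : H.ConnectedComponent} {e : Sym2 V}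
    (he : e ∈ compEdges H c) (he' : e ∈ compEdges H c') : c = c' := by
  have hv := he.2 _ (Sym2.out_fst_mem e)
  have hv' := he'.2 _ (Sym2.out_fst_mem e)
  rw [ConnectedComponent.mem_supp_iff] at hv hv'
  exact hv.symm.trans hv'

lemma supp_subset_supp_of_compEdges_subset (hE : compEdges H c ⊆ H'.edgeSet) {v : V}
    (hv : v ∈ c.supp) : c.supp ⊆ (H'.connectedComponentMk v).supp := by
  let incl : H.induce c.supp →g H' :=
    ⟨Subtype.val, fun {x y} hxy => hE (mem_compEdges_of_adj hxy x.2)⟩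
  intro w hw
  rw [ConnectedComponent.mem_supp_iff, ConnectedComponent.eq]
  exact (((c.maximal_connected_induce_supp).1.preconnected ⟨v, hv⟩ ⟨w, hw⟩).map incl).symm

end compEdges

section iso

variable {c : H.ConnectedComponent} {α : Type*} {K : SimpleGraph α}

def compEmb (ψ : H.induce c.supp ≃g K) : α ↪ V :=
  ψ.symm.toEquiv.toEmbedding.trans (Function.Embedding.subtype _)

lemma range_compEmb (ψ : H.induce c.supp ≃g K) : Set.range (compEmb ψ) = c.supp := by
  ext v
  refine ⟨?_, fun hv => ⟨ψ ⟨v, hv⟩, by simp [compEmb]⟩⟩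
  rintro ⟨i, rfl⟩
  exact (ψ.symm i).2

lemma compEdges_eq_image (ψ : H.induce c.supp ≃g K) :
    compEdges H c = Sym2.map (compEmb ψ) '' K.edgeSet := by
  apply Set.Subset.antisymm
  · intro e
    induction e using Sym2.ind with
    | _ a b =>
      rintro ⟨hab, hsupp⟩
      have ha : a ∈ c.supp := hsupp a (Sym2.mem_mk_left a b)
      have hb : b ∈ c.supp := hsupp b (Sym2.mem_mk_right a b)
      refine ⟨s(ψ ⟨a, ha⟩, ψ ⟨b, hb⟩), ψ.map_adj_iff.mpr hab, ?_⟩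
      simp [compEmb]
  · rintro _ ⟨e, he, rfl⟩
    induction e using Sym2.ind with
    | _ i j =>
      rw [Sym2.map_mk]
      exact mem_compEdges_of_adj (ψ.symm.map_adj_iff.mpr he) (ψ.symm i).2

lemma ncard_supp_eq (ψ : H.induce c.supp ≃g K) : c.supp.ncard = Nat.card α := by
  rw [← Nat.card_coe_set_eq]
  exact Nat.card_congr ψ.toEquiv

lemma ncard_compEdges_eq (ψ : H.induce c.supp ≃g K) :
    (compEdges H c).ncard = K.edgeSet.ncard := by
  rw [compEdges_eq_image ψ]
  exact Set.ncard_image_of_injective _ (Sym2.map.injective (compEmb ψ).injective)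

end iso

lemma IsHexComp.ncard_supp {c : H.ConnectedComponent} (hc : IsHexComp H c) :
    c.supp.ncard = 6 := by
  obtain ⟨ψ⟩ := hc
  simp [ncard_supp_eq ψ]

lemma IsEdgeComp.ncard_supp {c : H.ConnectedComponent} (hc : IsEdgeComp H c) :
    c.supp.ncard = 2 := by
  obtain ⟨ψ⟩ := hc
  simp [ncard_supp_eq ψ]

lemma IsHexComp.ncard_compEdges {c : H.ConnectedComponent} (hc : IsHexComp H c) :
    (compEdges H c).ncard = (cycleGraph 6).edgeSet.ncard := by
  obtain ⟨ψ⟩ := hc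
  exact ncard_compEdges_eq ψ

lemma IsHexComp.not_isEdgeComp {c : H.ConnectedComponent} (hc : IsHexComp H c) :
    ¬ IsEdgeComp H c := fun hc' => by
  have := hc.ncard_supp.symm.trans hc'.ncard_supp
  omega

def IsCompMatching (H : SimpleGraph V) (c : H.ConnectedComponent) (S : Set (Sym2 V)) : Prop :=
  S ⊆ compEdges H c ∧ ∀ v ∈ c.supp, ∃! e, e ∈ S ∧ v ∈ e

lemma isCompMatching_image {c : H.ConnectedComponent} {α : Type*} {K : SimpleGraph α}
    (ψ : H.induce c.supp ≃g K) {S : Set (Sym2 α)} (hS : S ⊆ K.edgeSet)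
    (hcov : ∀ i : α, ∃! e, e ∈ S ∧ i ∈ e) :
    IsCompMatching H c (Sym2.map (compEmb ψ) '' S) := by
  refine ⟨compEdges_eq_image ψ ▸ Set.image_mono hS, fun v hv => ?_⟩
  obtain ⟨i, rfl⟩ : v ∈ Set.range (compEmb ψ) := (range_compEmb ψ).symm ▸ hv
  obtain ⟨e, ⟨heS, hie⟩, huniq⟩ := hcov i
  refine ⟨Sym2.map (compEmb ψ) e, ⟨⟨e, heS, rfl⟩, Sym2.mem_map.mpr ⟨i, hie, rfl⟩⟩, ?_⟩
  rintro _ ⟨⟨f, hfS, rfl⟩, hif⟩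
  obtain ⟨j, hjf, hji⟩ := Sym2.mem_map.mp hif
  obtain rfl := (compEmb ψ).injective hji
  rw [huniq f ⟨hfS, hjf⟩]

def hexMatching : Bool → Set (Sym2 (Fin 6))
  | false => {s(0, 1), s(2, 3), s(4, 5)}
  | true => {s(1, 2), s(3, 4), s(5, 0)}

lemma hexMatching_subset (t : Bool) : hexMatching t ⊆ (cycleGraph 6).edgeSet := by
  cases t <;>
  · intro e he
    simp only [hexMatching, Set.mem_insert_iff, Set.mem_singleton_iff] at he
    rcases he with rfl | rfl | rfl <;> exact (mem_edgeSet _).mpr (by decide)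

lemma hexMatching_cover (t : Bool) : ∀ i : Fin 6, ∃! e, e ∈ hexMatching t ∧ i ∈ e := by
  cases t <;>
  · simp only [hexMatching, Set.mem_insert_iff, Set.mem_singleton_iff]
    unfold ExistsUnique
    decide

lemma hexMatching_union : hexMatching false ∪ hexMatching true = (cycleGraph 6).edgeSet := by
  ext e
  induction e using Sym2.ind with
  | _ a b =>
    simp only [hexMatching, Set.mem_union, Set.mem_insert_iff, Set.mem_singleton_iff,
      mem_edgeSet]
    revert a b
    decide

lemma edgeSet_top_fin_two : (⊤ : SimpleGraph (Fin 2)).edgeSet = {s(0, 1)} := by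
  ext e
  induction e using Sym2.ind with
  | _ a b =>
    rw [mem_edgeSet, Set.mem_singleton_iff]
    revert a b
    decide

lemma IsHexComp.exists_isCompMatching_union {c : H.ConnectedComponent} (hc : IsHexComp H c) :
    ∃ S₁ S₂, IsCompMatching H c S₁ ∧ IsCompMatching H c S₂ ∧ S₁ ∪ S₂ = compEdges H c := by
  obtain ⟨ψ⟩ := hc
  refine ⟨_, _, isCompMatching_image ψ (hexMatching_subset false) (hexMatching_cover false),
    isCompMatching_image ψ (hexMatching_subset true) (hexMatching_cover true), ?_⟩
  rw [← Set.image_union, hexMatching_union, compEdges_eq_image ψ]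

lemma IsEdgeComp.isCompMatching {c : H.ConnectedComponent} (hc : IsEdgeComp H c) :
    IsCompMatching H c (compEdges H c) := by
  obtain ⟨ψ⟩ := hc
  rw [compEdges_eq_image ψ]
  refine isCompMatching_image ψ subset_rfl ?_
  rw [edgeSet_top_fin_two]
  simp only [Set.mem_singleton_iff]
  unfold ExistsUnique
  decide

lemma IsPMSet.existsUnique_inter {M X : Set (Sym2 V)} (hM : IsPMSet G M) {e : Sym2 V}
    (he : e ∈ M ∩ X) {v : V} (hv : v ∈ e) : ∃! f, f ∈ M ∩ X ∧ v ∈ f :=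
  ⟨e, ⟨he, hv⟩, fun _ hf => (hM.2 v).unique ⟨hf.1.1, hf.2⟩ ⟨he.1, hv⟩⟩

lemma IsPMSet.isCompMatching_inter_of_subset {M S : Set (Sym2 V)} (hM : IsPMSet G M)
    {c : H.ConnectedComponent} (hS : IsCompMatching H c S) (hSM : S ⊆ M) :
    IsCompMatching H c (M ∩ compEdges H c) := by
  refine ⟨Set.inter_subset_right, fun v hv => ?_⟩
  obtain ⟨e, ⟨heS, hve⟩, -⟩ := hS.2 v hv
  exact hM.existsUnique_inter ⟨hSM heS, hS.1 heS⟩ hve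

lemma IsPMSet.isCompMatching_inter_of_subset_edgeSet {M : Set (Sym2 V)} (hM : IsPMSet G M)
    (hMH : M ⊆ H.edgeSet) (c : H.ConnectedComponent) :
    IsCompMatching H c (M ∩ compEdges H c) := by
  refine ⟨Set.inter_subset_right, fun v hv => ?_⟩
  obtain ⟨e, ⟨heM, hve⟩, -⟩ := hM.2 v
  exact hM.existsUnique_inter ⟨heM, mem_compEdges_of_mem (hMH heM) hve hv⟩ hve

lemma isPMSet_iUnion (hle : H ≤ G) {T : H.ConnectedComponent → Set (Sym2 V)}
    (hT : ∀ c, IsCompMatching H c (T c)) : IsPMSet G (⋃ c, T c) := by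
  refine ⟨Set.iUnion_subset fun c e he => edgeSet_mono hle ((hT c).1 he).1, fun v => ?_⟩
  obtain ⟨e, ⟨heT, hve⟩, huniq⟩ := (hT _).2 v rfl
  refine ⟨e, ⟨Set.mem_iUnion.mpr ⟨_, heT⟩, hve⟩, ?_⟩
  rintro f ⟨hf, hvf⟩
  obtain ⟨c, hfT⟩ := Set.mem_iUnion.mp hf
  obtain rfl : H.connectedComponentMk v = c := ((hT c).1 hfT).2 v hvf
  exact huniq f ⟨hfT, hvf⟩

lemma exists_mem_clarVC_of_forall (hle : H ≤ G) {T : H.ConnectedComponent → Set (Sym2 V)}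
    (hT : ∀ c, IsCompMatching H c (T c)) (hedge : ∀ c, IsEdgeComp H c → T c = compEdges H c) :
    ∃ M ∈ clarVC G H, ∀ c, T c ⊆ M.1 := by
  let M : {M : Set (Sym2 V) // IsPMSet G M} := ⟨⋃ c, T c, isPMSet_iUnion hle hT⟩
  have hTM : ∀ c, T c ⊆ M.1 := Set.subset_iUnion T
  refine ⟨M, ⟨fun c _ => (M.2.isCompMatching_inter_of_subset (hT c) (hTM c)).2,
    fun c hc => hedge c hc ▸ hTM c⟩, hTM⟩

lemma IsClarCover.exists_isCompMatching (hH : IsClarCover G H) (c : H.ConnectedComponent) :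
    ∃ S, IsCompMatching H c S ∧ (IsEdgeComp H c → S = compEdges H c) := by
  rcases hH.2 c with hc | hc
  · obtain ⟨S, -, hS, -, -⟩ := hc.exists_isCompMatching_union
    exact ⟨S, hS, fun hc' => absurd hc' hc.not_isEdgeComp⟩
  · exact ⟨_, hc.isCompMatching, fun _ => rfl⟩

lemma IsClarCover.clarVC_nonempty (hH : IsClarCover G H) : (clarVC G H).Nonempty := by
  choose T hT hedge using hH.exists_isCompMatching
  obtain ⟨M, hM, -⟩ := exists_mem_clarVC_of_forall hH.1 hT hedge
  exact ⟨M, hM⟩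

lemma IsClarCover.exists_mem_clarVC_superset (hH : IsClarCover G H) {c : H.ConnectedComponent}
    {S : Set (Sym2 V)} (hS : IsCompMatching H c S) (hedge : IsEdgeComp H c → S = compEdges H c) :
    ∃ M ∈ clarVC G H, S ⊆ M.1 := by
  classical
  have hext : ∀ c', ∃ T, IsCompMatching H c' T ∧ (IsEdgeComp H c' → T = compEdges H c') ∧
      (c' = c → T = S) := by
    intro c'
    by_cases h : c' = c
    · subst h
      exact ⟨S, hS, hedge, fun _ => rfl⟩
    · obtain ⟨T, hT, hTedge⟩ := hH.exists_isCompMatching c'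
      exact ⟨T, hT, hTedge, fun h' => absurd h' h⟩
  choose T hT hTedge hTc using hext
  obtain ⟨M, hM, hTM⟩ := exists_mem_clarVC_of_forall hH.1 hT hTedge
  exact ⟨M, hM, hTc c rfl ▸ hTM c⟩

lemma isCompMatching_inter_of_mem_clarVC
    (hcomp : ∀ c : H.ConnectedComponent, IsHexComp H c ∨ IsEdgeComp H c)
    {M : {M : Set (Sym2 V) // IsPMSet G M}} (hM : M ∈ clarVC G H) (c : H.ConnectedComponent) :
    IsCompMatching H c (M.1 ∩ compEdges H c) := by
  rcases hcomp c with hc | hc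
  · exact ⟨Set.inter_subset_right, hM.1 c hc⟩
  · exact M.2.isCompMatching_inter_of_subset hc.isCompMatching (hM.2 c hc)

lemma clarVC_subset_edgeSet
    (hcomp : ∀ c : H.ConnectedComponent, IsHexComp H c ∨ IsEdgeComp H c)
    {M : {M : Set (Sym2 V) // IsPMSet G M}} (hM : M ∈ clarVC G H) : M.1 ⊆ H.edgeSet := by
  intro e he
  obtain ⟨f, ⟨hf, hvf⟩, -⟩ := (isCompMatching_inter_of_mem_clarVC hcomp hM _).2 _
    (rfl : H.connectedComponentMk e.out.1 = _)
  rw [(M.2.2 _).unique ⟨he, Sym2.out_fst_mem e⟩ ⟨hf.1, hvf⟩]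
  exact hf.2.1

lemma isHexComp_of_supp_subset
    (hcomp' : ∀ c' : H'.ConnectedComponent, IsHexComp H' c' ∨ IsEdgeComp H' c')
    {c : H.ConnectedComponent} {c' : H'.ConnectedComponent} (hc : IsHexComp H c)
    (hsub : c.supp ⊆ c'.supp) : IsHexComp H' c' := by
  refine (hcomp' c').resolve_right fun hc' => ?_
  have hfin : c'.supp.Finite := Set.finite_of_ncard_ne_zero (by simp [hc'.ncard_supp])
  have := Set.ncard_le_ncard hsub hfin
  rw [hc.ncard_supp, hc'.ncard_supp] at this
  omega

lemma IsHexComp.exists_eq_of_compEdges_subset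
    (hcomp' : ∀ c' : H'.ConnectedComponent, IsHexComp H' c' ∨ IsEdgeComp H' c')
    {c : H.ConnectedComponent} (hc : IsHexComp H c) (hE : compEdges H c ⊆ H'.edgeSet) :
    ∃ c' : H'.ConnectedComponent, IsHexComp H' c' ∧ c'.supp = c.supp ∧
      compEdges H' c' = compEdges H c := by
  have hsub := supp_subset_supp_of_compEdges_subset hE (c.mem_supp_iff c.out |>.mpr c.out_eq)
  set c' := H'.connectedComponentMk c.out
  have hc' := isHexComp_of_supp_subset hcomp' hc hsub
  have hsupp : c'.supp = c.supp :=
    (Set.eq_of_subset_of_ncard_le hsub (by rw [hc.ncard_supp, hc'.ncard_supp])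
      (Set.finite_of_ncard_ne_zero (by simp [hc'.ncard_supp]))).symm
  have hEsub : compEdges H c ⊆ compEdges H' c' :=
    fun e he => ⟨hE he, fun v hv => hsupp ▸ he.2 v hv⟩
  have hfin : (compEdges H' c').Finite := by
    obtain ⟨φ⟩ := hc'
    exact compEdges_eq_image φ ▸ (Set.toFinite _).image _
  refine ⟨c', hc', hsupp, (Set.eq_of_subset_of_ncard_le hEsub ?_ hfin).symm⟩
  rw [hc.ncard_compEdges, hc'.ncard_compEdges]

/-- Each hexagon is the union of its two perfect matchings, and each of these extends to a
matching in `clarVC G H`. -/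
lemma IsClarCover.compEdges_subset_edgeSet_of_clarVC_subset (hH : IsClarCover G H)
    (hcomp' : ∀ c' : H'.ConnectedComponent, IsHexComp H' c' ∨ IsEdgeComp H' c')
    (hsub : clarVC G H ⊆ clarVC G H') {c : H.ConnectedComponent} (hc : IsHexComp H c) :
    compEdges H c ⊆ H'.edgeSet := by
  obtain ⟨S₁, S₂, hS₁, hS₂, hunion⟩ := hc.exists_isCompMatching_union
  have hS : ∀ S, IsCompMatching H c S → S ⊆ H'.edgeSet := fun S hS => by
    obtain ⟨M, hM, hSM⟩ :=
      hH.exists_mem_clarVC_superset hS fun hc' => absurd hc' hc.not_isEdgeComp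
    exact hSM.trans (clarVC_subset_edgeSet hcomp' (hsub hM))
  exact hunion ▸ Set.union_subset (hS S₁ hS₁) (hS S₂ hS₂)

lemma IsClarCover.edgeSet_diff_subset_of_clarVC_subset (hH : IsClarCover G H)
    (hH' : IsClarCover G H') (hsub : clarVC G H ⊆ clarVC G H') :
    H.edgeSet \ hexEdgeUnion H' ⊆ H'.edgeSet \ hexEdgeUnion H' := by
  rintro e ⟨he, heX⟩
  refine ⟨?_, heX⟩
  obtain ⟨c, hec⟩ := exists_mem_compEdges he
  rcases hH.2 c with hc | hc
  · obtain ⟨c', hc', -, hE⟩ := hc.exists_eq_of_compEdges_subset hH'.2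
      (hH.compEdges_subset_edgeSet_of_clarVC_subset hH'.2 hsub hc)
    exact absurd ⟨c', hc', hE ▸ hec⟩ heX
  · obtain ⟨M, hM⟩ := hH.clarVC_nonempty
    exact clarVC_subset_edgeSet hH'.2 (hsub hM) (hM.2 c hc hec)

lemma IsClarCover.edgeSet_diff_supset_of_clarVC_subset (hH : IsClarCover G H)
    (hcomp' : ∀ c' : H'.ConnectedComponent, IsHexComp H' c' ∨ IsEdgeComp H' c')
    (hsub : clarVC G H ⊆ clarVC G H') :
    H'.edgeSet \ hexEdgeUnion H' ⊆ H.edgeSet \ hexEdgeUnion H' := by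
  rintro e ⟨he, heX⟩
  refine ⟨?_, heX⟩
  obtain ⟨c', hec⟩ := exists_mem_compEdges he
  have hc' : IsEdgeComp H' c' := (hcomp' c').resolve_left fun hc' => heX ⟨c', hc', hec⟩
  obtain ⟨M, hM⟩ := hH.clarVC_nonempty
  exact clarVC_subset_edgeSet hH.2 hM ((hsub hM).2 c' hc' hec)

lemma IsEdgeComp.notMem_hexEdgeUnion {c : H.ConnectedComponent} (hc : IsEdgeComp H c)
    {e : Sym2 V} (he : e ∈ compEdges H c) : e ∉ hexEdgeUnion H :=
  fun ⟨_, hc', he'⟩ => hc'.not_isEdgeComp (eq_of_mem_compEdges he' he ▸ hc)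

lemma edgeSet_subset_of_diff_hexEdgeUnion_eq
    (h : H.edgeSet \ hexEdgeUnion H' = H'.edgeSet \ hexEdgeUnion H') :
    H.edgeSet ⊆ H'.edgeSet := by
  intro e he
  by_cases heX : e ∈ hexEdgeUnion H'
  · obtain ⟨_, -, hec⟩ := heX
    exact hec.1
  · exact (h ▸ ⟨he, heX⟩ : e ∈ H'.edgeSet \ hexEdgeUnion H').1

lemma IsClarCover.clarVC_subset_of_hexComp_of_diff_eq (hH : IsClarCover G H)
    (hcomp' : ∀ c' : H'.ConnectedComponent, IsHexComp H' c' ∨ IsEdgeComp H' c')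
    (hhex : ∀ c : H.ConnectedComponent, IsHexComp H c →
      ∃ c' : H'.ConnectedComponent, c'.supp = c.supp ∧ compEdges H' c' = compEdges H c)
    (hdiff : H.edgeSet \ hexEdgeUnion H' = H'.edgeSet \ hexEdgeUnion H') :
    clarVC G H ⊆ clarVC G H' := by
  intro M hM
  have hMH' : M.1 ⊆ H'.edgeSet :=
    (clarVC_subset_edgeSet hH.2 hM).trans (edgeSet_subset_of_diff_hexEdgeUnion_eq hdiff)
  refine ⟨fun c' _ => (M.2.isCompMatching_inter_of_subset_edgeSet hMH' c').2,
    fun c' hc' e hec' => ?_⟩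
  have heX := hc'.notMem_hexEdgeUnion hec'
  have heH : e ∈ H.edgeSet := (hdiff.symm ▸ ⟨hec'.1, heX⟩ : e ∈ H.edgeSet \ hexEdgeUnion H').1
  obtain ⟨c, hec⟩ := exists_mem_compEdges heH
  refine hM.2 c ((hH.2 c).resolve_left fun hc => heX ?_) hec
  obtain ⟨c'', hs, hE⟩ := hhex c hc
  exact ⟨c'', isHexComp_of_supp_subset hcomp' hc hs.symm.subset, hE ▸ hec⟩

end ClarCover

theorem clarVC_subset_iff_general {V : Type*} (G : SimpleGraph V)
    (H H' : SimpleGraph V) (hH : IsClarCover G H) (hH' : IsClarCover G H') :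
    clarVC G H ⊆ clarVC G H' ↔
      ((∀ c : H.ConnectedComponent, IsHexComp H c →
          ∃ c' : H'.ConnectedComponent, c'.supp = c.supp ∧
            compEdges H' c' = compEdges H c) ∧
        H.edgeSet \ hexEdgeUnion H' = H'.edgeSet \ hexEdgeUnion H') := by
  refine ⟨fun hsub => ⟨fun c hc => ?_, ?_⟩,
    fun ⟨hhex, hdiff⟩ => hH.clarVC_subset_of_hexComp_of_diff_eq hH'.2 hhex hdiff⟩
  · obtain ⟨c', -, hsupp, hE⟩ := hc.exists_eq_of_compEdges_subset hH'.2
      (hH.compEdges_subset_edgeSet_of_clarVC_subset hH'.2 hsub hc)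
    exact ⟨c', hsupp, hE⟩
  · exact (hH.edgeSet_diff_subset_of_clarVC_subset hH' hsub).antisymm
      (hH.edgeSet_diff_supset_of_clarVC_subset hH'.2 hsub)

/-- For Clar covers `C` and `C'` of a finite simple graph `G`,
`V(C) ⊆ V(C')` iff every hexagon component of `C` is a connected component of
`C'` and the edge sets of `C` and `C'` coincide apart from the edges lying in
hexagons of `C'`. -/
theorem clarVC_subset_iff {V : Type*} [Fintype V] (G : SimpleGraph V)
    (H H' : SimpleGraph V) (hH : IsClarCover G H) (hH' : IsClarCover G H') :
    clarVC G H ⊆ clarVC G H' ↔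
      ((∀ c : H.ConnectedComponent, IsHexComp H c →
          ∃ c' : H'.ConnectedComponent, c'.supp = c.supp ∧
            compEdges H' c' = compEdges H c) ∧
        H.edgeSet \ hexEdgeUnion H' = H'.edgeSet \ hexEdgeUnion H') :=
  clarVC_subset_iff_general G H H' hH hH'
end

section
/- Let G be a finite simple graph. Then the derivative of the Clar covering polynomial of G satisfies ζ'(G,x) = Σ_h ζ(G − V(h), x), where the summation runs over all 6-cycles h of G and G − V(h) denotes the graph obtained from G by deleting the six vertices of h together with all incident edges. Equivalently, k·z(G,k) = Σ_h z(G − V(h), k−1) for every positive integer k. -/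
open SimpleGraph Polynomial

/-- The number of hexagon components of `H`. -/
noncomputable def hexCount {V : Type*} (H : SimpleGraph V) : ℕ :=
  Nat.card {c : H.ConnectedComponent // IsHexComp H c}

/-- `z(G,k)`: the number of Clar covers of `G` with exactly `k` hexagon
components. -/
noncomputable def clarCount {V : Type*} (G : SimpleGraph V) (k : ℕ) : ℕ :=
  Nat.card {H : SimpleGraph V // IsClarCover G H ∧ hexCount H = k}

/-- The Clar covering polynomial `ζ(G,x) = Σ_k z(G,k)·xᵏ` of `G`.  (A Clar
cover with `k` hexagons has `6k` vertices, so `z(G,k) = 0` for `k > |V|` and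
the range of summation captures all nonzero terms.) -/
noncomputable def clarPoly {V : Type*} (G : SimpleGraph V) : Polynomial ℤ :=
  ∑ k ∈ Finset.range (Nat.card V + 1), Polynomial.C (clarCount G k : ℤ) * Polynomial.X ^ k

/-- The set of vertices lying on an edge of `E`. -/
def edgeSupp {V : Type*} (E : Set (Sym2 V)) : Set V :=
  {v | ∃ e ∈ E, v ∈ e}

/-!
Double count the pairs `(H, h)` where `H` is a Clar cover of `G` with `k` hexagons and `h` is a
hexagon component of `H`; each such `H` gives `k` pairs. Grouping the pairs instead by the edge
set `E` of `h`: deleting the component `h` from `H` leaves a Clar cover of `G - V(E)` with `k - 1`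
hexagons, and gluing the hexagon `E` back onto any such cover inverts this, so `E` is paired
`z(G - V(E), k - 1)` times. The polynomial identity is this count read off coefficientwise.
-/

namespace SimpleGraph

section AdjClosed

variable {V : Type*} {G H : SimpleGraph V} {S : Set V}

def IsAdjClosed (H : SimpleGraph V) (S : Set V) : Prop :=
  ∀ ⦃u v : V⦄, H.Adj u v → (u ∈ S ↔ v ∈ S)

lemma IsAdjClosed.compl (hS : H.IsAdjClosed S) : H.IsAdjClosed Sᶜ :=
  fun _ _ h => not_congr (hS h)

lemma ConnectedComponent.isAdjClosed_supp (c : H.ConnectedComponent) : H.IsAdjClosed c.supp :=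
  fun _ _ h => c.mem_supp_congr_adj h

lemma ConnectedComponent.supp_subset_compl_supp_iff {c c₀ : H.ConnectedComponent} :
    c.supp ⊆ c₀.suppᶜ ↔ c ≠ c₀ := by
  refine ⟨fun h hc => ?_, fun h => ?_⟩
  · obtain ⟨v, hv⟩ := c.nonempty_supp
    exact h hv (hc ▸ hv)
  · exact Set.subset_compl_iff_disjoint_right.mpr (pairwise_disjoint_supp_connectedComponent H h)

lemma IsAdjClosed.mem_of_reachable (hS : H.IsAdjClosed S) {u v : V} (h : H.Reachable u v)
    (hu : u ∈ S) : v ∈ S := by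
  obtain ⟨w⟩ := h
  induction w with
  | nil => exact hu
  | cons h _ ih => exact ih ((hS h).mp hu)

lemma IsAdjClosed.reachable_induce_iff (hS : H.IsAdjClosed S) {a b : S} :
    (H.induce S).Reachable a b ↔ H.Reachable a b := by
  classical
  refine ⟨fun h => h.map (Embedding.induce S).toHom, fun ⟨w⟩ => ?_⟩
  exact ⟨w.induce S fun x hx => hS.mem_of_reachable (w.takeUntil x hx).reachable a.2⟩

lemma IsAdjClosed.mem_supp_map_iff (hS : H.IsAdjClosed S) (d : (H.induce S).ConnectedComponent)
    (x : S) : (x : V) ∈ (d.map (Embedding.induce S).toHom).supp ↔ x ∈ d.supp := by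
  induction d using ConnectedComponent.ind with
  | h a =>
    simp only [ConnectedComponent.map_mk, ConnectedComponent.mem_supp_iff,
      ConnectedComponent.eq]
    exact hS.reachable_induce_iff.symm

lemma IsAdjClosed.supp_map_subset (hS : H.IsAdjClosed S) (d : (H.induce S).ConnectedComponent) :
    (d.map (Embedding.induce S).toHom).supp ⊆ S := by
  induction d using ConnectedComponent.ind with
  | h a => exact fun v hv => hS.mem_of_reachable (ConnectedComponent.exact hv).symm a.2

lemma IsAdjClosed.map_injective (hS : H.IsAdjClosed S) :
    Function.Injective (ConnectedComponent.map (Embedding.induce (G := H) S).toHom) := by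
  intro d₁ d₂ h
  induction d₁ using ConnectedComponent.ind with
  | h a =>
  induction d₂ using ConnectedComponent.ind with
  | h b =>
    simp only [ConnectedComponent.map_mk, ConnectedComponent.eq] at h ⊢
    exact hS.reachable_induce_iff.mpr h

lemma exists_map_induce_eq {c : H.ConnectedComponent} (hc : c.supp ⊆ S) :
    ∃ d : (H.induce S).ConnectedComponent, d.map (Embedding.induce S).toHom = c := by
  obtain ⟨v, rfl⟩ := c.exists_rep
  exact ⟨(H.induce S).connectedComponentMk ⟨v, hc rfl⟩, rfl⟩

def IsAdjClosed.induceSuppIso (hS : H.IsAdjClosed S) (d : (H.induce S).ConnectedComponent) :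
    (H.induce S).induce d.supp ≃g H.induce (d.map (Embedding.induce S).toHom).supp where
  toFun x := ⟨x.1, (hS.mem_supp_map_iff d x).mpr x.2⟩
  invFun v := ⟨⟨v, hS.supp_map_subset d v.2⟩, (hS.mem_supp_map_iff d _).mp v.2⟩
  map_rel_iff' := Iff.rfl

lemma IsAdjClosed.isHexComp_induce_iff (hS : H.IsAdjClosed S)
    (d : (H.induce S).ConnectedComponent) :
    IsHexComp (H.induce S) d ↔ IsHexComp H (d.map (Embedding.induce S).toHom) :=
  ⟨fun ⟨ψ⟩ => ⟨(hS.induceSuppIso d).symm.trans ψ⟩, fun ⟨ψ⟩ => ⟨(hS.induceSuppIso d).trans ψ⟩⟩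

lemma IsAdjClosed.isEdgeComp_induce_iff (hS : H.IsAdjClosed S)
    (d : (H.induce S).ConnectedComponent) :
    IsEdgeComp (H.induce S) d ↔ IsEdgeComp H (d.map (Embedding.induce S).toHom) :=
  ⟨fun ⟨ψ⟩ => ⟨(hS.induceSuppIso d).symm.trans ψ⟩, fun ⟨ψ⟩ => ⟨(hS.induceSuppIso d).trans ψ⟩⟩

lemma IsAdjClosed.hexCount_induce (hS : H.IsAdjClosed S) :
    hexCount (H.induce S) = Nat.card {c : H.ConnectedComponent // IsHexComp H c ∧ c.supp ⊆ S} :=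
  Nat.card_congr <| Equiv.ofBijective
    (fun d => ⟨d.1.map _, (hS.isHexComp_induce_iff d.1).mp d.2, hS.supp_map_subset d.1⟩)
    ⟨fun d₁ d₂ h => Subtype.ext (hS.map_injective (congrArg Subtype.val h)), by
      rintro ⟨c, hc, hcS⟩
      obtain ⟨d, rfl⟩ := exists_map_induce_eq hcS
      exact ⟨⟨d, (hS.isHexComp_induce_iff d).mpr hc⟩, rfl⟩⟩

lemma IsAdjClosed.isClarCover (hS : H.IsAdjClosed S) (hle : H ≤ G)
    (hcover : IsClarCover (G.induce S) (H.induce S))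
    (hout : ∀ c : H.ConnectedComponent, ¬ c.supp ⊆ S → IsHexComp H c ∨ IsEdgeComp H c) :
    IsClarCover G H := by
  refine ⟨hle, fun c => ?_⟩
  by_cases hc : c.supp ⊆ S
  · obtain ⟨d, rfl⟩ := exists_map_induce_eq hc
    rw [← hS.isHexComp_induce_iff, ← hS.isEdgeComp_induce_iff]
    exact hcover.2 d
  · exact hout c hc

lemma Embedding.supp_connectedComponentMk_eq_range {W : Type*} {K : SimpleGraph W}
    (φ : K ↪g H) (hK : K.Preconnected) (hφ : H.IsAdjClosed (Set.range φ)) (w : W) :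
    (H.connectedComponentMk (φ w)).supp = Set.range φ := by
  ext v
  refine ⟨fun hv => hφ.mem_of_reachable (ConnectedComponent.exact hv).symm ⟨w, rfl⟩, ?_⟩
  rintro ⟨w', rfl⟩
  exact ConnectedComponent.sound ((hK w w').map φ.toHom).symm

end AdjClosed

lemma nonempty_induce_iso_iff_exists_embedding {V W : Type*} {H : SimpleGraph V}
    {K : SimpleGraph W} {X : Set V} :
    Nonempty (H.induce X ≃g K) ↔ ∃ φ : K ↪g H, Set.range φ = X := by
  refine ⟨fun ⟨ψ⟩ => ⟨(Embedding.induce X).comp ψ.symm.toEmbedding, ?_⟩, ?_⟩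
  · simp only [RelEmbedding.coe_trans, Set.range_comp, RelIso.coe_toRelEmbedding,
      EquivLike.range_eq_univ, Set.image_univ]
    exact Subtype.range_coe
  · rintro ⟨φ, rfl⟩
    exact ⟨φ.isoInduceRange.symm⟩

lemma cycleGraph_six_adj {i j : Fin 6} : (cycleGraph 6).Adj i j ↔ j = i + 1 ∨ i = j + 1 := by
  revert i j; decide

end SimpleGraph

section Hexagons

variable {V : Type*} {G H : SimpleGraph V} {f : Fin 6 → V} {c : H.ConnectedComponent}

lemma IsHexComp.hexCount_eq [Finite V] (hc : IsHexComp H c) :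
    hexCount H = hexCount (H.induce c.suppᶜ) + 1 := by
  have : Finite H.ConnectedComponent := Quot.finite _
  simp_rw [c.isAdjClosed_supp.compl.hexCount_induce, ConnectedComponent.supp_subset_compl_supp_iff]
  exact (Set.ncard_sdiff_singleton_add_one (s := {c | IsHexComp H c}) hc).symm

lemma IsClarCover.induce {S : Set V} (h : IsClarCover G H) (hS : H.IsAdjClosed S) :
    IsClarCover (G.induce S) (H.induce S) := by
  refine ⟨fun _ _ hadj => h.1 hadj, fun d => ?_⟩
  rw [hS.isHexComp_induce_iff, hS.isEdgeComp_induce_iff]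
  exact h.2 _

lemma mem_hexEdges_iff (hf : Function.Injective f) {i j : Fin 6} :
    s(f i, f j) ∈ hexEdges f ↔ (cycleGraph 6).Adj i j := by
  rw [cycleGraph_six_adj]
  constructor
  · rintro ⟨k, h⟩
    rcases Sym2.eq_iff.mp h with ⟨h1, h2⟩ | ⟨h1, h2⟩
    · exact Or.inl (by rw [hf h1, hf h2])
    · exact Or.inr (by rw [hf h1, hf h2])
  · rintro (rfl | rfl)
    · exact ⟨i, rfl⟩
    · exact ⟨j, Sym2.eq_swap⟩

lemma edgeSupp_hexEdges (f : Fin 6 → V) : edgeSupp (hexEdges f) = Set.range f := by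
  ext v
  constructor
  · rintro ⟨e, ⟨i, rfl⟩, hv⟩
    rcases Sym2.mem_iff.mp hv with rfl | rfl
    exacts [⟨i, rfl⟩, ⟨i + 1, rfl⟩]
  · rintro ⟨i, rfl⟩
    exact ⟨s(f i, f (i + 1)), ⟨i, rfl⟩, Sym2.mem_mk_left _ _⟩

lemma IsHexCycle.mono (hf : IsHexCycle H f) (h : H ≤ G) : IsHexCycle G f :=
  ⟨hf.1, fun i => h (hf.2 i)⟩

lemma IsHexCycle.hexEdges_subset_edgeSet (hf : IsHexCycle G f) : hexEdges f ⊆ G.edgeSet := by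
  rintro _ ⟨i, rfl⟩
  exact hf.2 i

lemma SimpleGraph.Embedding.isHexCycle (φ : cycleGraph 6 ↪g H) : IsHexCycle H φ :=
  ⟨φ.injective, fun _ => φ.map_adj_iff.mpr (cycleGraph_six_adj.mpr (Or.inl rfl))⟩

lemma compEdges_eq_hexEdges (φ : cycleGraph 6 ↪g H) (hφ : Set.range φ = c.supp) :
    compEdges H c = hexEdges φ := by
  ext e
  induction e with
  | h u v =>
    constructor
    · rintro ⟨huv, hmem⟩
      obtain ⟨i, rfl⟩ : u ∈ Set.range φ := hφ ▸ hmem u (Sym2.mem_mk_left _ _)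
      obtain ⟨j, rfl⟩ : v ∈ Set.range φ := hφ ▸ hmem v (Sym2.mem_mk_right _ _)
      exact (mem_hexEdges_iff φ.injective).mpr (φ.map_adj_iff.mp huv)
    · intro h
      refine ⟨φ.isHexCycle.hexEdges_subset_edgeSet h, fun w hw => hφ ▸ ?_⟩
      exact edgeSupp_hexEdges φ ▸ ⟨_, h, hw⟩

lemma IsHexComp.exists_embedding (hc : IsHexComp H c) :
    ∃ φ : cycleGraph 6 ↪g H, Set.range φ = c.supp :=
  nonempty_induce_iso_iff_exists_embedding.mp hc

lemma IsHexComp.edgeSupp_compEdges (hc : IsHexComp H c) : edgeSupp (compEdges H c) = c.supp := by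
  obtain ⟨φ, hφ⟩ := hc.exists_embedding
  rw [compEdges_eq_hexEdges φ hφ, edgeSupp_hexEdges, hφ]

lemma IsHexComp.isHexagon_compEdges (hc : IsHexComp H c) (hle : H ≤ G) :
    IsHexagon G (compEdges H c) := by
  obtain ⟨φ, hφ⟩ := hc.exists_embedding
  exact ⟨φ, φ.isHexCycle.mono hle, compEdges_eq_hexEdges φ hφ⟩

end Hexagons

section Glue

variable {V : Type*} {G : SimpleGraph V} {E : Set (Sym2 V)}
  {H' : SimpleGraph {v : V | v ∉ edgeSupp E}}

def glueEdges (E : Set (Sym2 V)) (H' : SimpleGraph {v : V | v ∉ edgeSupp E}) : SimpleGraph V :=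
  fromEdgeSet E ⊔ H'.map (Function.Embedding.subtype _)

lemma glueEdges_adj_of_mem_edgeSupp {u v : V} (hu : u ∈ edgeSupp E) :
    (glueEdges E H').Adj u v ↔ s(u, v) ∈ E ∧ u ≠ v := by
  simp only [glueEdges, sup_adj, fromEdgeSet_adj, map_adj, or_iff_left_iff_imp]
  rintro ⟨u', v', -, rfl, -⟩
  exact absurd hu u'.2

lemma glueEdges_adj_of_notMem_edgeSupp {u v : V} (hu : u ∉ edgeSupp E) :
    (glueEdges E H').Adj u v ↔ ∃ hv : v ∉ edgeSupp E, H'.Adj ⟨u, hu⟩ ⟨v, hv⟩ := by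
  simp only [glueEdges, sup_adj, fromEdgeSet_adj, map_adj]
  constructor
  · rintro (⟨h, -⟩ | ⟨u', v', h, rfl, rfl⟩)
    exacts [absurd ⟨_, h, Sym2.mem_mk_left _ _⟩ hu, ⟨v'.2, h⟩]
  · exact fun ⟨_, h⟩ => Or.inr ⟨_, _, h, rfl, rfl⟩

lemma induce_glueEdges : (glueEdges E H').induce {v | v ∉ edgeSupp E} = H' := by
  ext ⟨u, hu⟩ ⟨v, hv⟩
  exact (glueEdges_adj_of_notMem_edgeSupp hu).trans ⟨fun ⟨_, h⟩ => h, fun h => ⟨hv, h⟩⟩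

lemma isAdjClosed_glueEdges : (glueEdges E H').IsAdjClosed (edgeSupp E) := by
  rintro u v (⟨h, -⟩ | ⟨-, u', v', -, rfl, rfl⟩)
  · exact iff_of_true ⟨_, h, Sym2.mem_mk_left _ _⟩ ⟨_, h, Sym2.mem_mk_right _ _⟩
  · exact iff_of_false u'.2 v'.2

lemma glueEdges_le (hE : E ⊆ G.edgeSet) (hH' : H' ≤ G.induce {v | v ∉ edgeSupp E}) :
    glueEdges E H' ≤ G :=
  sup_le ((fromEdgeSet_le G).mpr (Set.sdiff_subset.trans hE)) ((map_le_iff_le_comap _ _ _).mpr hH')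

def glueEdgesHexEmbedding {f : Fin 6 → V} (hf : Function.Injective f)
    (H' : SimpleGraph {v : V | v ∉ edgeSupp (hexEdges f)}) :
    cycleGraph 6 ↪g glueEdges (hexEdges f) H' where
  toFun := f
  inj' := hf
  map_rel_iff' {i j} := by
    have hfi : f i ∈ edgeSupp (hexEdges f) := edgeSupp_hexEdges f ▸ ⟨i, rfl⟩
    simp only [Function.Embedding.coeFn_mk, glueEdges_adj_of_mem_edgeSupp hfi, mem_hexEdges_iff hf,
      and_iff_left_iff_imp]
    exact fun h => hf.ne h.ne

end Glue

section HexCompEdges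

variable {V : Type*} {G H : SimpleGraph V} {E : Set (Sym2 V)}

def IsHexCompEdges (H : SimpleGraph V) (E : Set (Sym2 V)) : Prop :=
  ∃ c : H.ConnectedComponent, IsHexComp H c ∧ compEdges H c = E

lemma IsHexCompEdges.isHexagon (hE : IsHexCompEdges H E) (hle : H ≤ G) : IsHexagon G E :=
  let ⟨_, hc, hedges⟩ := hE
  hedges ▸ hc.isHexagon_compEdges hle

lemma card_isHexCompEdges : Nat.card {E // IsHexCompEdges H E} = hexCount H := by
  refine (Nat.card_congr (Equiv.ofBijective
    (fun c : {c // IsHexComp H c} => ⟨compEdges H c, c, c.2, rfl⟩) ⟨fun c₁ c₂ h => ?_, ?_⟩)).symm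
  · have := congrArg (edgeSupp ∘ Subtype.val) h
    simp only [Function.comp_apply, c₁.2.edgeSupp_compEdges, c₂.2.edgeSupp_compEdges] at this
    exact Subtype.ext (ConnectedComponent.supp_inj.mp this)
  · rintro ⟨E, c, hc, rfl⟩
    exact ⟨⟨c, hc⟩, rfl⟩

lemma IsHexCompEdges.isClarCover_induce (hE : IsHexCompEdges H E) (hH : IsClarCover G H) :
    IsClarCover (G.induce {v | v ∉ edgeSupp E}) (H.induce {v | v ∉ edgeSupp E}) := by
  obtain ⟨c, hc, rfl⟩ := hE
  rw [hc.edgeSupp_compEdges]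
  exact hH.induce c.isAdjClosed_supp.compl

lemma IsHexCompEdges.hexCount_eq [Finite V] (hE : IsHexCompEdges H E) :
    hexCount H = hexCount (H.induce {v | v ∉ edgeSupp E}) + 1 := by
  obtain ⟨c, hc, rfl⟩ := hE
  rw [hc.edgeSupp_compEdges]
  exact hc.hexCount_eq

lemma IsHexCompEdges.glueEdges_induce (hE : IsHexCompEdges H E) :
    glueEdges E (H.induce {v | v ∉ edgeSupp E}) = H := by
  obtain ⟨c, hc, rfl⟩ := hE
  have hsupp := hc.edgeSupp_compEdges
  ext u v
  by_cases hu : u ∈ edgeSupp (compEdges H c)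
  · rw [glueEdges_adj_of_mem_edgeSupp hu]
    refine ⟨fun h => h.1.1, fun h => ⟨⟨h, fun w hw => ?_⟩, h.ne⟩⟩
    rw [hsupp] at hu
    rcases Sym2.mem_iff.mp hw with rfl | rfl
    exacts [hu, (c.isAdjClosed_supp h).mp hu]
  · rw [glueEdges_adj_of_notMem_edgeSupp hu]
    refine ⟨fun ⟨_, h⟩ => h, fun h => ⟨?_, h⟩⟩
    rw [hsupp] at hu ⊢
    exact fun hv => hu ((c.isAdjClosed_supp h).mpr hv)

variable {f : Fin 6 → V}

lemma exists_isHexComp_glueEdges (hf : Function.Injective f)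
    (H' : SimpleGraph {v : V | v ∉ edgeSupp (hexEdges f)}) :
    ∃ c : (glueEdges (hexEdges f) H').ConnectedComponent, IsHexComp _ c ∧
      c.supp = edgeSupp (hexEdges f) ∧ compEdges _ c = hexEdges f := by
  let φ := glueEdgesHexEmbedding hf H'
  have hrange : Set.range φ = edgeSupp (hexEdges f) := (edgeSupp_hexEdges f).symm
  have hsupp :=
    φ.supp_connectedComponentMk_eq_range cycleGraph_connected.preconnected
      (hrange ▸ isAdjClosed_glueEdges) 0
  exact ⟨_, nonempty_induce_iso_iff_exists_embedding.mpr ⟨φ, hsupp.symm⟩, hsupp.trans hrange,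
    compEdges_eq_hexEdges φ hsupp.symm⟩

lemma isHexCompEdges_glueEdges (hf : Function.Injective f)
    (H' : SimpleGraph {v : V | v ∉ edgeSupp (hexEdges f)}) :
    IsHexCompEdges (glueEdges (hexEdges f) H') (hexEdges f) :=
  let ⟨c, hc, _, hedges⟩ := exists_isHexComp_glueEdges hf H'
  ⟨c, hc, hedges⟩

lemma hexCount_glueEdges [Finite V] (hf : Function.Injective f)
    (H' : SimpleGraph {v : V | v ∉ edgeSupp (hexEdges f)}) :
    hexCount (glueEdges (hexEdges f) H') = hexCount H' + 1 := by
  rw [(isHexCompEdges_glueEdges hf H').hexCount_eq, induce_glueEdges]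

lemma IsHexCycle.isClarCover_glueEdges (hf : IsHexCycle G f)
    {H' : SimpleGraph {v : V | v ∉ edgeSupp (hexEdges f)}}
    (hH' : IsClarCover (G.induce {v | v ∉ edgeSupp (hexEdges f)}) H') :
    IsClarCover G (glueEdges (hexEdges f) H') := by
  obtain ⟨c, hc, hsupp, -⟩ := exists_isHexComp_glueEdges hf.1 H'
  refine isAdjClosed_glueEdges.compl.isClarCover (glueEdges_le hf.hexEdges_subset_edgeSet hH'.1)
    (induce_glueEdges ▸ hH') fun c' hc' => ?_
  rw [← hsupp, ConnectedComponent.supp_subset_compl_supp_iff, not_not] at hc'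
  exact Or.inl (hc' ▸ hc)

lemma card_clarCover_isHexCompEdges [Finite V] (hE : IsHexagon G E) (k : ℕ) :
    Nat.card {H // (IsClarCover G H ∧ hexCount H = k + 1) ∧ IsHexCompEdges H E} =
      clarCount (G.induce {v | v ∉ edgeSupp E}) k := by
  obtain ⟨f, hf, rfl⟩ := hE
  exact Nat.card_congr
    { toFun := fun H => ⟨H.1.induce _, H.2.2.isClarCover_induce H.2.1.1,
        by have := H.2.2.hexCount_eq; omega⟩
      invFun := fun H' => ⟨glueEdges _ H'.1,
        ⟨hf.isClarCover_glueEdges H'.2.1, by rw [hexCount_glueEdges hf.1, H'.2.2]⟩,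
        isHexCompEdges_glueEdges hf.1 _⟩
      left_inv := fun H => Subtype.ext H.2.2.glueEdges_induce
      right_inv := fun H' => Subtype.ext induce_glueEdges }

end HexCompEdges

section ClarPoly

variable {V : Type*} (G : SimpleGraph V)

open Finset in
lemma succ_mul_clarCount_succ [Fintype V] (k : ℕ) :
    (k + 1) * clarCount G (k + 1) =
      ∑ᶠ E ∈ {E : Set (Sym2 V) | IsHexagon G E}, clarCount (G.induce {v | v ∉ edgeSupp E}) k := by
  classical
  let covers : Finset (SimpleGraph V) := {H | IsClarCover G H ∧ hexCount H = k + 1}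
  let hexagons : Finset (Set (Sym2 V)) := {E | IsHexagon G E}
  have hcovers : ∀ H ∈ covers, #(hexagons.bipartiteAbove IsHexCompEdges H) = k + 1 := by
    intro H hH
    rw [mem_filter_univ] at hH
    have : hexagons.bipartiteAbove IsHexCompEdges H = ({E | IsHexCompEdges H E} : Finset _) := by
      rw [bipartiteAbove, filter_filter]
      exact filter_congr fun E _ => and_iff_right_of_imp fun hE => hE.isHexagon hH.1.1
    rw [this, ← Fintype.card_subtype, ← Nat.card_eq_fintype_card, card_isHexCompEdges, hH.2]
  have hhexagons : ∀ E ∈ hexagons, #(covers.bipartiteBelow IsHexCompEdges E) =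
      clarCount (G.induce {v | v ∉ edgeSupp E}) k := by
    intro E hE
    rw [mem_filter_univ] at hE
    rw [bipartiteBelow, filter_filter, ← Fintype.card_subtype, ← Nat.card_eq_fintype_card,
      card_clarCover_isHexCompEdges hE]
  calc (k + 1) * clarCount G (k + 1)
      = ∑ H ∈ covers, #(hexagons.bipartiteAbove IsHexCompEdges H) := by
        rw [sum_congr rfl hcovers, sum_const, smul_eq_mul, mul_comm, clarCount,
          Nat.card_eq_fintype_card, Fintype.card_subtype]
    _ = ∑ E ∈ hexagons, #(covers.bipartiteBelow IsHexCompEdges E) :=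
        sum_card_bipartiteAbove_eq_sum_card_bipartiteBelow _
    _ = _ := by
        rw [sum_congr rfl hhexagons, ← finsum_mem_coe_finset, coe_filter_univ]

lemma hexCount_le_card [Finite V] (H : SimpleGraph V) : hexCount H ≤ Nat.card V :=
  (Nat.card_le_card_of_injective _ Subtype.val_injective).trans
    (Nat.card_le_card_of_surjective _ fun c => c.exists_rep)

lemma clarCount_eq_zero_of_card_lt [Finite V] {m : ℕ} (hm : Nat.card V < m) :
    clarCount G m = 0 :=
  Nat.card_eq_zero.mpr <| Or.inl ⟨fun H => by have := hexCount_le_card H.1; omega⟩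

lemma coeff_clarPoly [Finite V] (m : ℕ) : (clarPoly G).coeff m = clarCount G m := by
  simp only [clarPoly, finsetSum_coeff, coeff_C_mul_X_pow]
  rw [Finset.sum_ite_eq (Finset.range (Nat.card V + 1)) m fun k => (clarCount G k : ℤ)]
  split_ifs with hm
  · rfl
  · rw [clarCount_eq_zero_of_card_lt G (by simpa using hm), Nat.cast_zero]

end ClarPoly

/-- The derivative of the Clar covering polynomial of a finite
simple graph `G` satisfies `ζ'(G,x) = Σ_h ζ(G − V(h), x)`, the sum running over
all 6-cycles `h` of `G` (given by their edge sets); equivalently,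
`k·z(G,k) = Σ_h z(G − V(h), k − 1)` for every positive integer `k`. -/
theorem clarPoly_derivative {V : Type*} [Fintype V] (G : SimpleGraph V) :
    (Polynomial.derivative (clarPoly G) =
        ∑ᶠ E ∈ {E : Set (Sym2 V) | IsHexagon G E},
          clarPoly (G.induce {v : V | v ∉ edgeSupp E})) ∧
      (∀ k : ℕ, 0 < k →
        k * clarCount G k =
          ∑ᶠ E ∈ {E : Set (Sym2 V) | IsHexagon G E},
            clarCount (G.induce {v : V | v ∉ edgeSupp E}) (k - 1)) := by
  have hfin : {E : Set (Sym2 V) | IsHexagon G E}.Finite := Set.toFinite _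
  refine ⟨Polynomial.ext fun n => ?_, fun k hk => ?_⟩
  · rw [coeff_derivative, coeff_clarPoly, finsum_mem_eq_finite_toFinset_sum _ hfin,
      finsetSum_coeff]
    simp_rw [coeff_clarPoly]
    rw [← Nat.cast_sum, ← finsum_mem_eq_finite_toFinset_sum _ hfin, ← succ_mul_clarCount_succ]
    push_cast
    ring
  · obtain ⟨k, rfl⟩ := Nat.exists_eq_add_one_of_ne_zero hk.ne'
    exact succ_mul_clarCount_succ G k
end
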